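/- Let n, t ∈ ℕ with 8 ≤ t < n and t divisible by 8, let V_I be a nonempty proposal set and V_O a decision set, and let val be a validity property such that the val-agreement problem is non-trivial (⋂_{c ∈ I} val(c) = ∅). Then every deterministic algorithm that solves the val-agreement problem in the omission model has message complexity at least t²/32. -/

import Mathlib

/-- A message: a sender, a (distinct) receiver and a round number. -/
structure Message (n : ℕ) where
  sender : Fin n
  receiver : Fin n
  round : ℕ
  ne : sender ≠ receiver

/-- A valid set of messages received by a process in state `s`:
every message has the right receiver and round, and there is
at most one message per sender. -/
def ValidRecv {n : ℕ} {St : Type} (proc : St → Fin n) (rnd : St → ℕ)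
    (s : St) (M : Set (Message n)) : Prop :=
  (∀ m ∈ M, m.receiver = proc s ∧ m.round = rnd s) ∧
  (∀ m ∈ M, ∀ m' ∈ M, m.sender = m'.sender → m = m')

/-- A deterministic algorithm in the synchronous (omission) model:
a type of local states recording a process, a round, a proposal and a
decision, initial states and initial messages for every proposal, and a
deterministic transition function. -/
structure Algorithm (n : ℕ) (Vi Vo : Type) where
  St : Type
  proc : St → Fin n
  rnd : St → ℕ
  prop : St → Vi
  dec : St → Option Vo
  init : Fin n → Vi → St
  initMsgs : Fin n → Vi → Set (Message n)
  trans : St → Set (Message n) → St × Set (Message n)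
  init_proc : ∀ i v, proc (init i v) = i
  init_rnd : ∀ i v, rnd (init i v) = 1
  init_prop : ∀ i v, prop (init i v) = v
  init_dec : ∀ i v, dec (init i v) = none
  initMsgs_sender : ∀ i v, ∀ m ∈ initMsgs i v, m.sender = i
  initMsgs_round : ∀ i v, ∀ m ∈ initMsgs i v, m.round = 1
  initMsgs_uniq : ∀ i v, ∀ m ∈ initMsgs i v, ∀ m' ∈ initMsgs i v,
    m.receiver = m'.receiver → m = m'
  trans_ok : ∀ s M, ValidRecv proc rnd s M →
    proc (trans s M).1 = proc s ∧
    rnd (trans s M).1 = rnd s + 1 ∧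
    prop (trans s M).1 = prop s ∧
    (dec s ≠ none → dec (trans s M).1 = dec s) ∧
    (∀ m ∈ (trans s M).2, m.sender = proc s ∧ m.round = rnd s + 1) ∧
    (∀ m ∈ (trans s M).2, ∀ m' ∈ (trans s M).2, m.receiver = m'.receiver → m = m')

/-- The data of an execution of algorithm `A`: the set of faulty
processes and, for every process and round, a state and the four sets of
sent, send-omitted, received and receive-omitted messages. -/
structure Exec {n : ℕ} {Vi Vo : Type} (A : Algorithm n Vi Vo) where
  faulty : Set (Fin n)
  st : Fin n → ℕ → A.St
  sent : Fin n → ℕ → Set (Message n)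
  sendOmit : Fin n → ℕ → Set (Message n)
  recvd : Fin n → ℕ → Set (Message n)
  recvOmit : Fin n → ℕ → Set (Message n)

/-- `j` is one of the rounds `1, …, k` (where `k ∈ ℕ ∪ {∞}`). -/
def InHorizon (k : ℕ∞) (j : ℕ) : Prop := 1 ≤ j ∧ (j : ℕ∞) ≤ k

/-- `E` is a `k`-round execution of `A` with at most `t` faulty processes. -/
def IsExec {n : ℕ} {Vi Vo : Type} (t : ℕ) (A : Algorithm n Vi Vo) (k : ℕ∞)
    (E : Exec A) : Prop :=
  -- at most `t` faulty processes
  E.faulty.encard ≤ (t : ℕ∞) ∧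
  -- every process starts in one of its initial states, with
  -- sent ∪ send-omitted equal to its prescribed initial send set
  ((1 : ℕ∞) ≤ k → ∀ i, ∃ v, E.st i 1 = A.init i v ∧
      E.sent i 1 ∪ E.sendOmit i 1 = A.initMsgs i v) ∧
  -- later states and sent ∪ send-omitted sets are obtained by the transition function
  (∀ i j, 1 ≤ j → ((j + 1 : ℕ) : ℕ∞) ≤ k →
      A.trans (E.st i j) (E.recvd i j)
        = (E.st i (j + 1), E.sent i (j + 1) ∪ E.sendOmit i (j + 1))) ∧
  -- per-round well-formedness (fragments)
  (∀ i j, InHorizon k j →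
      A.proc (E.st i j) = i ∧ A.rnd (E.st i j) = j ∧
      (∀ m ∈ E.sent i j ∪ E.sendOmit i j, m.sender = i ∧ m.round = j) ∧
      (∀ m ∈ E.recvd i j ∪ E.recvOmit i j, m.receiver = i ∧ m.round = j) ∧
      E.sent i j ∩ E.sendOmit i j = ∅ ∧
      E.recvd i j ∩ E.recvOmit i j = ∅ ∧
      (∀ m ∈ E.sent i j ∪ E.sendOmit i j, ∀ m' ∈ E.sent i j ∪ E.sendOmit i j,
        m.receiver = m'.receiver → m = m') ∧
      (∀ m ∈ E.recvd i j ∪ E.recvOmit i j, ∀ m' ∈ E.recvd i j ∪ E.recvOmit i j,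
        m.sender = m'.sender → m = m')) ∧
  -- send-validity
  (∀ i j, InHorizon k j → ∀ m ∈ E.sent i j,
      m ∈ E.recvd m.receiver j ∪ E.recvOmit m.receiver j) ∧
  -- receive-validity
  (∀ i j, InHorizon k j → ∀ m ∈ E.recvd i j ∪ E.recvOmit i j, m ∈ E.sent m.sender j) ∧
  -- omission-validity
  (∀ i, (∃ j, InHorizon k j ∧ (E.sendOmit i j ≠ ∅ ∨ E.recvOmit i j ≠ ∅)) → i ∈ E.faulty)

/-- Process `i` proposes `v` in `E`. -/
def Proposes {n : ℕ} {Vi Vo : Type} {A : Algorithm n Vi Vo}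
    (E : Exec A) (i : Fin n) (v : Vi) : Prop :=
  A.prop (E.st i 1) = v

/-- Process `i` decides `v` in the `k`-round execution `E`. -/
def Decides {n : ℕ} {Vi Vo : Type} {A : Algorithm n Vi Vo}
    (k : ℕ∞) (E : Exec A) (i : Fin n) (v : Vo) : Prop :=
  ∃ j, InHorizon k j ∧ A.dec (E.st i j) = some v

/-- The number of messages sent (not send-omitted) by correct processes in `E`. -/
noncomputable def msgCount {n : ℕ} {Vi Vo : Type} {A : Algorithm n Vi Vo}
    (E : Exec A) : ℕ∞ :=
  {m : Message n | ∃ i, i ∉ E.faulty ∧ ∃ j, 1 ≤ j ∧ m ∈ E.sent i j}.encard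

/-- The message complexity of `A`: the supremum, over all infinite
executions of `A` (with at most `t` faulty processes), of the number of
messages sent by correct processes. -/
noncomputable def MsgComplexity {n : ℕ} {Vi Vo : Type} (t : ℕ)
    (A : Algorithm n Vi Vo) : ℕ∞ :=
  ⨆ E : {E : Exec A // IsExec t A ⊤ E}, msgCount E.1

/-- Two `k`-round executions are indistinguishable to process `i`: it has the
same proposal and receives exactly the same messages in every round of both. -/
def Indist {n : ℕ} {Vi Vo : Type} {A : Algorithm n Vi Vo}
    (k : ℕ∞) (E E' : Exec A) (i : Fin n) : Prop :=
  A.prop (E.st i 1) = A.prop (E'.st i 1) ∧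
  ∀ j, InHorizon k j → E.recvd i j = E'.recvd i j

/-- Group `G ⊊ Π` of at most `t` processes is isolated from round `k` in the
infinite execution `E`: every process of `G` is faulty, send-omits no message,
and receive-omits exactly those messages sent to it in rounds `≥ k` by
processes outside `G`. -/
def IsolatedFrom {n : ℕ} {Vi Vo : Type} {A : Algorithm n Vi Vo}
    (t : ℕ) (E : Exec A) (G : Set (Fin n)) (k : ℕ) : Prop :=
  G ≠ Set.univ ∧ G.encard ≤ (t : ℕ∞) ∧
  ∀ g ∈ G, g ∈ E.faulty ∧
    (∀ j, 1 ≤ j → E.sendOmit g j = ∅) ∧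
    (∀ j, 1 ≤ j → E.recvOmit g j
      = {m | m.receiver = g ∧ m.sender ∉ G ∧ k ≤ j ∧ m ∈ E.sent m.sender j})

/-- An input configuration: an assignment of proposals to at least `n - t`
processes (`none` marks processes outside the domain `π(c)`). -/
def IsInputConf (n t : ℕ) {Vi : Type} (c : Fin n → Option Vi) : Prop :=
  n - t ≤ {i | c i ≠ none}.ncard

/-- The containment relation `c ⊒ c'` between input configurations. -/
def Contains {n : ℕ} {Vi : Type} (c c' : Fin n → Option Vi) : Prop :=
  ∀ i, c' i ≠ none → c i = c' i

/-- The execution `E` corresponds to the input configuration `c`: the correct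
processes of `E` are exactly those in `π(c)`, and each of them proposes its
value prescribed by `c`. -/
def CorrespondsTo {n : ℕ} {Vi Vo : Type} {A : Algorithm n Vi Vo}
    (E : Exec A) (c : Fin n → Option Vi) : Prop :=
  ∀ i, (i ∉ E.faulty → c i = some (A.prop (E.st i 1))) ∧ (i ∈ E.faulty → c i = none)

/-- `A` solves the `val`-agreement problem in the omission model, tolerating
`t` omission-faulty processes: every infinite execution satisfies Termination,
Agreement, and decided values are admissible for the corresponding input
configuration. -/
def SolvesVal {n : ℕ} {Vi Vo : Type} (t : ℕ) (A : Algorithm n Vi Vo)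
    (val : (Fin n → Option Vi) → Set Vo) : Prop :=
  ∀ E : Exec A, IsExec t A ⊤ E →
    -- Termination
    (∀ i, i ∉ E.faulty → ∃ v, Decides ⊤ E i v) ∧
    -- Agreement
    (∀ i i' v v', i ∉ E.faulty → i' ∉ E.faulty →
      Decides ⊤ E i v → Decides ⊤ E i' v' → v = v') ∧
    -- Validity
    (∀ c, CorrespondsTo E c → ∀ i, i ∉ E.faulty → ∀ v, Decides ⊤ E i v → v ∈ val c)


/-!
Suppose `t = 8 z` and correct processes always send fewer than `2 z² = t² / 32` messages. Fix a
group of `4 z` processes and an observer outside it, and look at the executions in which the group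
is faulty and stops receiving from some round on. As fewer than `2 z²` messages are sent, fewer
than `z` group members lose messages from `2 z` or more senders. For any other member `c`, blaming
the lost messages on their senders gives a valid execution in which `c` is correct, so `c`'s view
determines the observer's decision. Picking such a `c` whose view does not change, the observer's
decision is unchanged when one more message into the group is let through, hence when the group is
cut off one round later, hence it equals its decision in the execution without omissions; and when
the group hears nothing at all, changing one input does not change it either. So the failure-free
decision is the same for all inputs and, by validity, lies in `val c` for every input configuration
`c`, contradicting non-triviality.
-/

open Finset

theorem mul_card_le_card_of_le_card_fiber {α β : Type*} [DecidableEq β] (T : Finset α)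
    (f : α → β) (B : Finset β) (a : ℕ) (h : ∀ b ∈ B, a ≤ #{x ∈ T | f x = b}) :
    a * #B ≤ #T :=
  calc a * #B ≤ #{x ∈ T | f x ∈ B} := by
        refine mul_card_image_le_card_of_maps_to (fun x hx => (mem_filter.1 hx).2) a
          fun b hb => (h b hb).trans (card_le_card fun x hx => ?_)
        simp only [mem_filter] at hx ⊢
        exact ⟨⟨hx.1, hx.2 ▸ hb⟩, hx.2⟩
    _ ≤ #T := card_filter_le _ _

theorem Fin.exists_notMem_of_ncard_lt {n : ℕ} {X : Set (Fin n)} (h : X.ncard < n) :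
    ∃ q, q ∉ X := by
  by_contra! hX
  rw [Set.eq_univ_of_forall hX, Set.ncard_univ, Nat.card_eq_fintype_card,
    Fintype.card_fin] at h
  exact h.false

theorem eq_of_forall_update_eq {ι α β : Type*} [Fintype ι] [DecidableEq ι]
    (f : (ι → α) → β) (h : ∀ w i a, f (Function.update w i a) = f w) (w w' : ι → α) :
    f w' = f w := by
  have key : ∀ s : Finset ι, f (s.piecewise w' w) = f w := by
    intro s
    induction s using Finset.induction_on with
    | empty => rw [Finset.piecewise_empty]
    | insert j s _ ih => rw [Finset.piecewise_insert, h, ih]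
  simpa using key Finset.univ

def inbox {n : ℕ} (out : Fin n → Set (Message n)) (drop : Message n → Prop) (i : Fin n) :
    Set (Message n) :=
  {m | m ∈ out m.sender ∧ m.receiver = i ∧ ¬ drop m}

namespace Algorithm

variable {n : ℕ} {Vi Vo : Type} (A : Algorithm n Vi Vo)

/-- The run of `A` on inputs `w` in which exactly the messages satisfying `drop` are lost.
Index `j` holds the states and outgoing messages of round `j + 1`. -/
def run (w : Fin n → Vi) (drop : Message n → Prop) : ℕ → Fin n → A.St × Set (Message n)
  | 0 => fun i => (A.init i (w i), A.initMsgs i (w i))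
  | j + 1 => fun i => A.trans (run w drop j i).1 (inbox (fun p => (run w drop j p).2) drop i)

theorem run_succ (w : Fin n → Vi) (drop : Message n → Prop) (j : ℕ) (i : Fin n) :
    A.run w drop (j + 1) i
      = A.trans (A.run w drop j i).1 (inbox (fun p => (A.run w drop j p).2) drop i) :=
  rfl

theorem run_spec (w : Fin n → Vi) (drop : Message n → Prop) (j : ℕ) (i : Fin n) :
    A.proc (A.run w drop j i).1 = i ∧ A.rnd (A.run w drop j i).1 = j + 1 ∧
    (∀ m ∈ (A.run w drop j i).2, m.sender = i ∧ m.round = j + 1) ∧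
    (∀ m ∈ (A.run w drop j i).2, ∀ m' ∈ (A.run w drop j i).2,
      m.receiver = m'.receiver → m = m') := by
  induction j generalizing i with
  | zero =>
    exact ⟨A.init_proc i (w i), A.init_rnd i (w i),
      fun m hm => ⟨A.initMsgs_sender i (w i) m hm, A.initMsgs_round i (w i) m hm⟩,
      A.initMsgs_uniq i (w i)⟩
  | succ j ih =>
    have hvalid : ValidRecv A.proc A.rnd (A.run w drop j i).1
        (inbox (fun p => (A.run w drop j p).2) drop i) := by
      refine ⟨fun m ⟨hm, hmi, _⟩ => ⟨hmi.trans (ih i).1.symm, ?_⟩, ?_⟩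
      · rw [((ih m.sender).2.2.1 m hm).2, (ih i).2.1]
      · rintro m ⟨hm, hmi, -⟩ m' ⟨hm', hm'i, -⟩ hs
        exact (ih m.sender).2.2.2 m hm m' (hs ▸ hm') (hmi.trans hm'i.symm)
    obtain ⟨hproc, hrnd, -, -, hout, huniq⟩ := A.trans_ok _ _ hvalid
    rw [run_succ]
    refine ⟨hproc.trans (ih i).1, by rw [hrnd, (ih i).2.1], fun m hm => ?_, huniq⟩
    rw [← (ih i).1, ← (ih i).2.1]
    exact hout m hm

def emitted (w : Fin n → Vi) (drop : Message n → Prop) (j : ℕ) : Set (Message n) :=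
  {m | m ∈ (A.run w drop j m.sender).2}

variable {A}

theorem round_of_mem_run {w : Fin n → Vi} {drop : Message n → Prop} {j : ℕ} {m : Message n}
    (hm : m ∈ (A.run w drop j m.sender).2) : m.round = j + 1 :=
  ((A.run_spec w drop j m.sender).2.2.1 m hm).2

theorem run_congr {w : Fin n → Vi} {drop drop' : Message n → Prop}
    (h : ∀ j (m : Message n), m ∈ (A.run w drop j m.sender).2 → (drop m ↔ drop' m)) (j : ℕ) :
    A.run w drop j = A.run w drop' j := by
  induction j with
  | zero => rfl
  | succ j ih =>
    funext i
    rw [run_succ, run_succ, ← ih]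
    congr 1
    ext m
    simp only [inbox, Set.mem_ofPred_eq]
    have := h j m
    tauto

theorem run_eq_run_false {w : Fin n → Vi} {drop : Message n → Prop} {K : ℕ}
    (h : ∀ m, drop m → K ≤ m.round) {j : ℕ} (hj : j < K) :
    A.run w drop j = A.run w (fun _ => False) j := by
  induction j with
  | zero => rfl
  | succ j ih =>
    funext i
    rw [run_succ, run_succ, ih (by omega)]
    congr 1
    ext m
    simp only [inbox, Set.mem_ofPred_eq, not_false_eq_true, and_true]
    refine and_congr_right fun hm => and_iff_left_of_imp fun _ hd => ?_
    have := round_of_mem_run hm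
    have := h m hd
    omega

variable (A)

/-- A lost message is send-omitted if it satisfies `sdrop` and receive-omitted otherwise. -/
def toExec (w : Fin n → Vi) (drop sdrop : Message n → Prop) (F : Set (Fin n)) : Exec A where
  faulty := F
  st i j := (A.run w drop (j - 1) i).1
  sent i j := {m ∈ (A.run w drop (j - 1) i).2 | ¬ sdrop m}
  sendOmit i j := {m ∈ (A.run w drop (j - 1) i).2 | sdrop m}
  recvd i j := inbox (fun p => (A.run w drop (j - 1) p).2) drop i
  recvOmit i j := {m | m ∈ (A.run w drop (j - 1) m.sender).2 ∧ m.receiver = i ∧ drop m ∧ ¬ sdrop m}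

def reliableExec (w : Fin n → Vi) (F : Set (Fin n)) : Exec A :=
  A.toExec w (fun _ => False) (fun _ => False) F

variable {A}

theorem toExec_sent_union_sendOmit (w : Fin n → Vi) (drop sdrop : Message n → Prop)
    (F : Set (Fin n)) (i : Fin n) (j : ℕ) :
    (A.toExec w drop sdrop F).sent i j ∪ (A.toExec w drop sdrop F).sendOmit i j
      = (A.run w drop (j - 1) i).2 := by
  ext m
  simp only [toExec, Set.mem_union, Set.mem_ofPred_eq]
  tauto

theorem isExec_toExec {t : ℕ} {w : Fin n → Vi} {drop sdrop : Message n → Prop}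
    {F : Set (Fin n)} (hsdrop : ∀ m, sdrop m → drop m)
    (hsend : ∀ j (m : Message n), m ∈ (A.run w drop j m.sender).2 → sdrop m → m.sender ∈ F)
    (hrecv : ∀ j (m : Message n), m ∈ (A.run w drop j m.sender).2 → drop m → ¬ sdrop m →
      m.receiver ∈ F)
    (hF : F.encard ≤ t) : IsExec t A ⊤ (A.toExec w drop sdrop F) := by
  have hsr : ∀ {i j m}, m ∈ (A.run w drop (j - 1) i).2 → 1 ≤ j → m.sender = i ∧ m.round = j :=
    fun hm hj => ((A.run_spec w drop _ _).2.2.1 _ hm).imp_right (by omega)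
  refine ⟨hF, fun _ i => ⟨w i, rfl, toExec_sent_union_sendOmit ..⟩, fun i j hj _ => ?_,
    fun i j ⟨hj, _⟩ => ?_, ?_, ?_, ?_⟩
  · obtain ⟨j, rfl⟩ := Nat.exists_eq_add_of_le' hj
    rw [toExec_sent_union_sendOmit]
    rfl
  · obtain ⟨hproc, hrnd, -, huniq⟩ := A.run_spec w drop (j - 1) i
    refine ⟨hproc, hrnd.trans (by omega), ?_, ?_,
      Set.ext fun m => ?_, Set.ext fun m => ?_, ?_, ?_⟩
    · rintro m (⟨hm, -⟩ | ⟨hm, -⟩) <;> exact hsr hm hj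
    · rintro m (⟨hm, hmi, -⟩ | ⟨hm, hmi, -⟩) <;> exact ⟨hmi, (hsr hm hj).2⟩
    · simp only [toExec, Set.mem_inter_iff, Set.mem_ofPred_eq, Set.mem_empty_iff_false]
      tauto
    · simp only [toExec, inbox, Set.mem_inter_iff, Set.mem_ofPred_eq, Set.mem_empty_iff_false]
      tauto
    · rintro m (⟨hm, -⟩ | ⟨hm, -⟩) m' (⟨hm', -⟩ | ⟨hm', -⟩) <;> exact huniq m hm m' hm'
    · rintro m (⟨hm, hmi, -⟩ | ⟨hm, hmi, -⟩) m' (⟨hm', hm'i, -⟩ | ⟨hm', hm'i, -⟩) hs <;>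
        exact (A.run_spec w drop _ m.sender).2.2.2 m hm m' (hs ▸ hm') (hmi.trans hm'i.symm)
  · rintro i j ⟨hj, -⟩ m ⟨hm, hns⟩
    rw [← (hsr hm hj).1] at hm
    by_cases hd : drop m
    · exact Or.inr ⟨hm, rfl, hd, hns⟩
    · exact Or.inl ⟨hm, rfl, hd⟩
  · rintro i j - m (⟨hm, -, hnd⟩ | ⟨hm, -, -, hns⟩)
    · exact ⟨hm, fun hs => hnd (hsdrop m hs)⟩
    · exact ⟨hm, hns⟩
  · rintro i ⟨j, ⟨hj, -⟩, h | h⟩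
    · obtain ⟨m, hm, hs⟩ := Set.nonempty_iff_ne_empty.mpr h
      have hmi := (hsr hm hj).1
      exact hmi ▸ hsend _ m (hmi ▸ hm) hs
    · obtain ⟨m, hm, hmi, hd, hns⟩ := Set.nonempty_iff_ne_empty.mpr h
      exact hmi ▸ hrecv _ m hm hd hns

theorem isExec_reliableExec {t : ℕ} (w : Fin n → Vi) {F : Set (Fin n)} (hF : F.encard ≤ t) :
    IsExec t A ⊤ (A.reliableExec w F) :=
  isExec_toExec (fun _ => id) (fun _ _ _ => False.elim) (fun _ _ _ => False.elim) hF

end Algorithm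

section Executions

variable {n : ℕ} {Vi Vo : Type} {A : Algorithm n Vi Vo}

theorem Exec.st_eq_of_indist {t : ℕ} {E E' : Exec A} (hE : IsExec t A ⊤ E)
    (hE' : IsExec t A ⊤ E') {i : Fin n} (h : Indist ⊤ E E' i) {j : ℕ} (hj : 1 ≤ j) :
    E.st i j = E'.st i j := by
  induction j, hj using Nat.le_induction with
  | base =>
    obtain ⟨v, hv, -⟩ := hE.2.1 le_top i
    obtain ⟨v', hv', -⟩ := hE'.2.1 le_top i
    have hprop := h.1
    rw [hv, hv', A.init_prop, A.init_prop] at hprop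
    rw [hv, hv', hprop]
  | succ j hj ih =>
    have hstep : (A.trans (E.st i j) (E.recvd i j)).1 = E.st i (j + 1) := by
      rw [hE.2.2.1 i j hj le_top]
    have hstep' : (A.trans (E'.st i j) (E'.recvd i j)).1 = E'.st i (j + 1) := by
      rw [hE'.2.2.1 i j hj le_top]
    rw [← hstep, ← hstep', ih, h.2 j ⟨hj, le_top⟩]

theorem Decides.of_indist {t : ℕ} {E E' : Exec A} (hE : IsExec t A ⊤ E)
    (hE' : IsExec t A ⊤ E') {i : Fin n} (h : Indist ⊤ E E' i) {v : Vo}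
    (hd : Decides ⊤ E i v) : Decides ⊤ E' i v := by
  obtain ⟨j, hj, hdj⟩ := hd
  exact ⟨j, hj, Exec.st_eq_of_indist hE hE' h hj.1 ▸ hdj⟩

theorem Exec.exists_finset_of_msgCount_lt {E : Exec A} {N : ℕ} (h : msgCount E < N) :
    ∃ T : Finset (Message n), #T < N ∧ ∀ i ∉ E.faulty, ∀ j, 1 ≤ j → E.sent i j ⊆ T := by
  have hfin := Set.finite_of_encard_le_coe h.le
  refine ⟨hfin.toFinset, ?_, fun i hi j hj m hm => hfin.mem_toFinset.2 ⟨i, hi, j, hj, hm⟩⟩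
  rw [msgCount, hfin.encard_eq_coe_toFinset_card] at h
  exact_mod_cast h

end Executions

section InputConfigurations

variable {n t : ℕ} {Vi : Type} {c : Fin n → Option Vi}

theorem IsInputConf.encard_none_le (hc : IsInputConf n t c) : {i | c i = none}.encard ≤ t := by
  have hsum := Set.ncard_add_ncard_compl {i | c i = none}
  simp only [Nat.card_eq_fintype_card, Fintype.card_fin] at hsum
  have hc' : n - t ≤ {i | c i = none}ᶜ.ncard := hc
  exact Set.encard_le_coe_iff_finite_ncard_le.2 ⟨Set.toFinite _, by omega⟩

theorem IsInputConf.exists_ne_none (hc : IsInputConf n t c) (htn : t < n) : ∃ i, c i ≠ none :=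
  Set.nonempty_of_ncard_ne_zero (s := {i | c i ≠ none}) (by unfold IsInputConf at hc; omega)

theorem correspondsTo_reliableExec {Vo : Type} (A : Algorithm n Vi Vo) (c : Fin n → Option Vi)
    (d : Vi) : CorrespondsTo (A.reliableExec (fun i => (c i).getD d) {i | c i = none}) c := by
  refine fun i => ⟨fun hi => ?_, id⟩
  obtain ⟨x, hx⟩ := Option.ne_none_iff_exists'.mp hi
  change c i = some (A.prop (A.init i ((c i).getD d)))
  rw [A.init_prop, hx, Option.getD_some]

end InputConfigurations

structure CheapSolver (n : ℕ) (Vi Vo : Type) where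
  A : Algorithm n Vi Vo
  z : ℕ
  val : (Fin n → Option Vi) → Set Vo
  lt : 8 * z < n
  solves : SolvesVal (8 * z) A val
  msgCount_lt : ∀ E, IsExec (8 * z) A ⊤ E → msgCount E < (2 * z ^ 2 : ℕ)

namespace CheapSolver

open Algorithm

variable {n : ℕ} {Vi Vo : Type} (C : CheapSolver n Vi Vo)

def group : Finset (Fin n) :=
  univ.map (Fin.castLEEmb (by have := C.lt; omega : 4 * C.z ≤ n))

theorem card_group : #C.group = 4 * C.z := by
  rw [group, card_map, card_univ, Fintype.card_fin]

theorem ncard_group : (C.group : Set (Fin n)).ncard = 4 * C.z := by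
  rw [Set.ncard_coe_finset, card_group]

def observer : Fin n := ⟨4 * C.z, by have := C.lt; omega⟩

theorem observer_notMem_group : C.observer ∉ C.group := by
  simpa [group, observer, Fin.ext_iff] using fun x : Fin (4 * C.z) => x.isLt.ne

def Blocked (k : ℕ) (S : Set (Message n)) (m : Message n) : Prop :=
  m.receiver ∈ C.group ∧ (k < m.round ∨ m.round = k ∧ m ∉ S)

variable {C}

theorem le_round_of_blocked {k : ℕ} {S : Set (Message n)} {m : Message n}
    (h : C.Blocked k S m) : k ≤ m.round := by
  rcases h.2 with h | h <;> omega

variable (C)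

def isolated (w : Fin n → Vi) (k : ℕ) (S : Set (Message n)) : Exec C.A :=
  C.A.toExec w (C.Blocked k S) (fun _ => False) C.group

theorem isExec_isolated (w : Fin n → Vi) (k : ℕ) (S : Set (Message n)) :
    IsExec (8 * C.z) C.A ⊤ (C.isolated w k S) :=
  isExec_toExec (fun _ => False.elim) (fun _ _ _ => False.elim) (fun _ _ _ hb _ => hb.1)
    (Set.encard_le_coe_iff_finite_ncard_le.2 ⟨Set.toFinite _, by rw [ncard_group]; omega⟩)

noncomputable def decision (w : Fin n → Vi) (k : ℕ) (S : Set (Message n)) : Vo :=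
  ((C.solves _ (C.isExec_isolated w k S)).1 C.observer C.observer_notMem_group).choose

theorem decides_decision (w : Fin n → Vi) (k : ℕ) (S : Set (Message n)) :
    Decides ⊤ (C.isolated w k S) C.observer (C.decision w k S) :=
  Exists.choose_spec _

variable {C}

theorem eq_decision {w : Fin n → Vi} {k : ℕ} {S : Set (Message n)} {i : Fin n}
    (hi : i ∉ C.group) {v : Vo} (h : Decides ⊤ (C.isolated w k S) i v) :
    v = C.decision w k S :=
  (C.solves _ (C.isExec_isolated w k S)).2.1 i C.observer v _ hi C.observer_notMem_group h
    (C.decides_decision w k S)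

theorem isolated_recvd {w : Fin n → Vi} {k : ℕ} {S : Set (Message n)} {c : Fin n}
    (hc : c ∈ C.group) {j : ℕ} (hj : 1 ≤ j) :
    (C.isolated w k S).recvd c j
      = {m ∈ (C.A.reliableExec w ∅).recvd c j | j < k ∨ j = k ∧ m ∈ S} := by
  ext m
  simp only [isolated, reliableExec, toExec, inbox, Blocked, Set.mem_ofPred_eq,
    not_false_eq_true, and_true, and_assoc]
  by_cases hjk : j ≤ k
  · rw [run_eq_run_false (K := k) (fun _ => le_round_of_blocked) (by omega)]
    refine and_congr_right fun hm => ?_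
    have := round_of_mem_run hm
    constructor
    · rintro ⟨rfl, hb⟩
      refine ⟨rfl, ?_⟩
      by_contra h
      rcases Nat.lt_or_eq_of_le hjk with hlt | rfl
      · exact h (Or.inl hlt)
      · exact hb ⟨hc, Or.inr ⟨by omega, fun hS => h (Or.inr ⟨rfl, hS⟩)⟩⟩
    · rintro ⟨rfl, h⟩
      refine ⟨rfl, fun ⟨_, hb⟩ => ?_⟩
      rcases hb with hb | ⟨hb, hmS⟩ <;> rcases h with h | ⟨h, hS⟩ <;>
        first | omega | exact hmS hS
  · constructor
    · rintro ⟨hm, rfl, hb⟩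
      exact absurd ⟨hc, Or.inl (by have := round_of_mem_run hm; omega)⟩ hb
    · rintro ⟨-, h⟩
      omega

def blockedTo (w : Fin n → Vi) (k : ℕ) (S : Set (Message n)) (c : Fin n) : Set (Message n) :=
  {m | m.receiver = c ∧ m.sender ∉ C.group ∧ C.Blocked k S m ∧
    m ∈ (C.A.run w (C.Blocked k S) (m.round - 1) m.sender).2}

def blockers (w : Fin n → Vi) (k : ℕ) (S : Set (Message n)) (c : Fin n) : Set (Fin n) :=
  Message.sender '' C.blockedTo w k S c

def IsGood (w : Fin n → Vi) (k : ℕ) (S : Set (Message n)) (c : Fin n) : Prop :=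
  (C.blockers w k S c).ncard < 2 * C.z

theorem exists_few_not_isGood (w : Fin n → Vi) (k : ℕ) (S : Set (Message n)) :
    ∃ B : Finset (Fin n), #B < C.z ∧ ∀ c ∉ B, C.IsGood w k S c := by
  classical
  obtain ⟨T, hT, hsent⟩ :=
    Exec.exists_finset_of_msgCount_lt (C.msgCount_lt _ (C.isExec_isolated w k S))
  have hle : ∀ c, (C.blockers w k S c).ncard ≤ #{m ∈ T | m.receiver = c} := by
    intro c
    have hsub : C.blockedTo w k S c ⊆ ↑({m ∈ T | m.receiver = c}) := by
      rintro m ⟨hmc, hs, -, hm⟩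
      rw [coe_filter]
      exact ⟨hsent m.sender hs m.round (by rw [round_of_mem_run hm]; omega) ⟨hm, not_false⟩, hmc⟩
    calc (C.blockers w k S c).ncard ≤ (C.blockedTo w k S c).ncard :=
          Set.ncard_image_le ((finite_toSet _).subset hsub)
      _ ≤ _ := (Set.ncard_le_ncard hsub).trans (Set.ncard_coe_finset _).le
  refine ⟨({c | 2 * C.z ≤ #{m ∈ T | m.receiver = c}} : Finset (Fin n)), ?_,
    fun c hc => (hle c).trans_lt (by simpa using hc)⟩
  have := mul_card_le_card_of_le_card_fiber T Message.receiver
    {c | 2 * C.z ≤ #{m ∈ T | m.receiver = c}} (2 * C.z) (fun b hb => (mem_filter.1 hb).2)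
  nlinarith

theorem exists_isGood_isGood (w₁ : Fin n → Vi) (k₁ : ℕ) (S₁ : Set (Message n))
    (w₂ : Fin n → Vi) (k₂ : ℕ) (S₂ : Set (Message n)) (r : Fin n) :
    ∃ c ∈ C.group, c ≠ r ∧ C.IsGood w₁ k₁ S₁ c ∧ C.IsGood w₂ k₂ S₂ c := by
  classical
  obtain ⟨B₁, hB₁, hg₁⟩ := C.exists_few_not_isGood w₁ k₁ S₁
  obtain ⟨B₂, hB₂, hg₂⟩ := C.exists_few_not_isGood w₂ k₂ S₂
  obtain ⟨c, hc, hcB⟩ := exists_mem_notMem_of_card_lt_card (s := insert r (B₁ ∪ B₂))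
    (t := C.group) (by
      have := card_insert_le r (B₁ ∪ B₂)
      have := card_union_le B₁ B₂
      have := C.card_group
      omega)
  simp only [mem_insert, mem_union, not_or] at hcB
  exact ⟨c, hc, hcB.1, hg₁ c hcB.2.1, hg₂ c hcB.2.2⟩

/-- `C.isolated w k S` with the losses of messages to `c` blamed on their senders, so that `c`
is correct. -/
def blame (w : Fin n → Vi) (k : ℕ) (S : Set (Message n)) (c : Fin n) : Exec C.A :=
  C.A.toExec w (C.Blocked k S) (fun m => C.Blocked k S m ∧ m.receiver = c)
    ((↑C.group ∪ C.blockers w k S c) \ {c})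

theorem isExec_blame {w : Fin n → Vi} {k : ℕ} {S : Set (Message n)} {c : Fin n}
    (hg : C.IsGood w k S c) : IsExec (8 * C.z) C.A ⊤ (C.blame w k S c) := by
  refine isExec_toExec (fun m h => h.1) (fun j m hm ⟨hb, hmc⟩ => ⟨?_, ?_⟩)
    (fun j m hm hb hns => ⟨Or.inl hb.1, fun hmc => hns ⟨hb, hmc⟩⟩) ?_
  · by_cases hs : m.sender ∈ C.group
    · exact Or.inl hs
    · refine Or.inr ⟨m, ⟨hmc, hs, hb, ?_⟩, rfl⟩
      rwa [round_of_mem_run hm, Nat.add_sub_cancel]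
  · exact fun hmc' => m.ne (hmc'.trans hmc.symm)
  · refine Set.encard_le_coe_iff_finite_ncard_le.2 ⟨Set.toFinite _, ?_⟩
    have := Set.ncard_le_ncard (Set.sdiff_subset (s := ↑C.group ∪ C.blockers w k S c) (t := {c}))
    have := Set.ncard_union_le (↑C.group) (C.blockers w k S c)
    unfold IsGood at hg
    rw [ncard_group] at *
    omega

theorem eq_decision_of_decides_blame {w : Fin n → Vi} {k : ℕ} {S : Set (Message n)}
    {c q : Fin n} (hg : C.IsGood w k S c) (hq : q ∉ ↑C.group ∪ C.blockers w k S c) {γ : Vo}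
    (h : Decides ⊤ (C.blame w k S c) c γ) : γ = C.decision w k S := by
  have hqg : q ∉ C.group := fun h => hq (Or.inl h)
  obtain ⟨u, hu⟩ := (C.solves _ (C.isExec_isolated w k S)).1 q hqg
  have hγu : γ = u :=
    (C.solves _ (C.isExec_blame hg)).2.1 c q γ u (fun h => h.2 rfl) (fun h => hq h.1) h hu
  exact hγu ▸ eq_decision hqg hu

theorem decision_eq_of_indist {w₁ w₂ : Fin n → Vi} {k₁ k₂ : ℕ} {S₁ S₂ : Set (Message n)}
    {c : Fin n} (hg₁ : C.IsGood w₁ k₁ S₁ c) (hg₂ : C.IsGood w₂ k₂ S₂ c)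
    (h : Indist ⊤ (C.isolated w₁ k₁ S₁) (C.isolated w₂ k₂ S₂) c) :
    C.decision w₁ k₁ S₁ = C.decision w₂ k₂ S₂ := by
  obtain ⟨q, hq⟩ : ∃ q, q ∉ (↑C.group ∪ C.blockers w₁ k₁ S₁ c) ∪ C.blockers w₂ k₂ S₂ c := by
    refine Fin.exists_notMem_of_ncard_lt ?_
    have := Set.ncard_union_le (↑C.group ∪ C.blockers w₁ k₁ S₁ c) (C.blockers w₂ k₂ S₂ c)
    have := Set.ncard_union_le (↑C.group) (C.blockers w₁ k₁ S₁ c)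
    have := C.ncard_group
    have := C.lt
    unfold IsGood at hg₁ hg₂
    omega
  obtain ⟨γ, hγ⟩ := (C.solves _ (C.isExec_blame hg₁)).1 c (fun h => h.2 rfl)
  rw [← eq_decision_of_decides_blame hg₁ (fun h => hq (Or.inl h)) hγ]
  exact eq_decision_of_decides_blame hg₂ (fun h => h.elim (fun h => hq (Or.inl (Or.inl h)))
    (fun h => hq (Or.inr h))) (hγ.of_indist (C.isExec_blame hg₁) (C.isExec_blame hg₂) h)

theorem decision_insert (w : Fin n → Vi) (k : ℕ) (S : Set (Message n)) (μ : Message n) :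
    C.decision w k (insert μ S) = C.decision w k S := by
  obtain ⟨c, hc, hcμ, hg, hg'⟩ := C.exists_isGood_isGood w k (insert μ S) w k S μ.receiver
  refine decision_eq_of_indist hg hg' ⟨rfl, fun j ⟨hj, _⟩ => ?_⟩
  rw [isolated_recvd hc hj, isolated_recvd hc hj]
  refine Set.sep_ext_iff.2 fun m ⟨_, hmc, _⟩ => ?_
  have hmμ : m ≠ μ := fun h => hcμ (h ▸ hmc.symm)
  rw [Set.mem_insert_iff, or_iff_right hmμ]

theorem decision_eq_of_finite (w : Fin n → Vi) (k : ℕ) {S : Set (Message n)} (hS : S.Finite) :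
    C.decision w k S = C.decision w k ∅ := by
  induction S, hS using Set.Finite.induction_on with
  | empty => rfl
  | insert _ _ ih => rw [decision_insert, ih]

theorem finite_emitted (w : Fin n → Vi) (k : ℕ) :
    (C.A.emitted w (fun _ => False) k).Finite := by
  obtain ⟨T, -, hT⟩ := Exec.exists_finset_of_msgCount_lt
    (C.msgCount_lt _ (isExec_reliableExec (A := C.A) w (F := ∅) (by simp)))
  exact T.finite_toSet.subset fun m hm =>
    hT m.sender (Set.notMem_empty _) (k + 1) (by omega) ⟨hm, not_false⟩

theorem decision_succ (w : Fin n → Vi) (k : ℕ) :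
    C.decision w (k + 1) (C.A.emitted w (fun _ => False) k) = C.decision w (k + 2) ∅ := by
  set S := C.A.emitted w (fun _ => False) k
  have hrun : C.A.run w (C.Blocked (k + 1) S) = C.A.run w (C.Blocked (k + 2) ∅) := by
    refine funext (run_congr fun j m hm => ?_)
    have hr := round_of_mem_run hm
    have hS : m.round = k + 1 → m ∈ S := fun h => by
      rwa [show j = k by omega, run_eq_run_false (K := k + 1) (fun _ => le_round_of_blocked)
        (by omega)] at hm
    simp only [Blocked, Set.mem_empty_iff_false, not_false_eq_true, and_true]
    refine and_congr_right fun _ => ⟨?_, ?_⟩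
    · rintro (h | ⟨h, hmS⟩)
      · omega
      · exact absurd (hS h) hmS
    · omega
  obtain ⟨j, hj, hd⟩ := C.decides_decision w (k + 1) S
  refine eq_decision (S := ∅) C.observer_notMem_group ⟨j, hj, ?_⟩
  change C.A.dec (C.A.run w (C.Blocked (k + 2) ∅) (j - 1) C.observer).1 = _
  rwa [← hrun]

theorem decision_eq_decision_one (w : Fin n → Vi) (k : ℕ) :
    C.decision w (k + 1) ∅ = C.decision w 1 ∅ := by
  induction k with
  | zero => rfl
  | succ k ih =>
    rw [← decision_succ, decision_eq_of_finite _ _ (C.finite_emitted w k), ih]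

theorem eq_decision_of_decides_reliable {w : Fin n → Vi} {i : Fin n} {v : Vo}
    (h : Decides ⊤ (C.A.reliableExec w ∅) i v) : v = C.decision w 1 ∅ := by
  have hE := isExec_reliableExec (t := 8 * C.z) (A := C.A) w (F := ∅) (by simp)
  obtain ⟨u, hu⟩ := (C.solves _ hE).1 C.observer (Set.notMem_empty _)
  have hvu := (C.solves _ hE).2.1 i C.observer v u (Set.notMem_empty _) (Set.notMem_empty _) h hu
  obtain ⟨r, hr, hdr⟩ := hu
  have hu' : u = C.decision w (r + 1) ∅ := by
    refine eq_decision C.observer_notMem_group ⟨r, hr, ?_⟩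
    change C.A.dec (C.A.run w (C.Blocked (r + 1) ∅) (r - 1) C.observer).1 = _
    rwa [run_eq_run_false (K := r + 1) (fun _ => le_round_of_blocked) (by omega)]
  rw [hvu, hu', decision_eq_decision_one]

theorem decision_update (w : Fin n → Vi) (r : Fin n) (a : Vi) :
    C.decision (Function.update w r a) 1 ∅ = C.decision w 1 ∅ := by
  obtain ⟨c, hc, hcr, hg, hg'⟩ := C.exists_isGood_isGood (Function.update w r a) 1 ∅ w 1 ∅ r
  refine decision_eq_of_indist hg hg' ⟨?_, fun j ⟨hj, _⟩ => ?_⟩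
  · change C.A.prop (C.A.init c _) = C.A.prop (C.A.init c _)
    rw [C.A.init_prop, C.A.init_prop, Function.update_of_ne hcr]
  · rw [isolated_recvd hc hj, isolated_recvd hc hj]
    simp only [Set.mem_empty_iff_false, and_false, or_false, show ¬ j < 1 by omega]

theorem decision_mem_val (d : Vi) {c : Fin n → Option Vi} (hc : IsInputConf n (8 * C.z) c) :
    C.decision (fun _ => d) 1 ∅ ∈ C.val c := by
  set w := fun i => (c i).getD d
  have hE := isExec_reliableExec (A := C.A) w hc.encard_none_le
  obtain ⟨i, hi⟩ := hc.exists_ne_none C.lt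
  obtain ⟨v, hv⟩ := (C.solves _ hE).1 i hi
  have hval := (C.solves _ hE).2.2 c (correspondsTo_reliableExec C.A c d) i hi v hv
  rwa [eq_decision_of_decides_reliable hv,
    eq_of_forall_update_eq (C.decision · 1 ∅) C.decision_update (fun _ => d) w] at hval

end CheapSolver

theorem nontrivial_agreement_message_lower_bound_general
    (n t : ℕ) (htn : t < n) (hdvd : 8 ∣ t)
    (Vi Vo : Type) [Nonempty Vi]
    (val : (Fin n → Option Vi) → Set Vo)
    -- the `val`-agreement problem is non-trivial
    (hnontriv : (⋂ c ∈ {c : Fin n → Option Vi | IsInputConf n t c}, val c) = ∅)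
    (A : Algorithm n Vi Vo) (hA : SolvesVal t A val) :
    ((t ^ 2 / 32 : ℕ) : ℕ∞) ≤ MsgComplexity t A := by
  obtain ⟨z, rfl⟩ := hdvd
  have hsq : (8 * z) ^ 2 / 32 = 2 * z ^ 2 := by
    rw [show (8 * z) ^ 2 = 32 * (2 * z ^ 2) by ring, Nat.mul_div_cancel_left _ (by norm_num)]
  by_contra! hlt
  let C : CheapSolver n Vi Vo := ⟨A, z, val, htn, hA, fun E hE =>
    (le_iSup (fun E : {E // IsExec (8 * z) A ⊤ E} => msgCount E.1) ⟨E, hE⟩).trans_lt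
      (hsq ▸ hlt)⟩
  obtain ⟨d⟩ := ‹Nonempty Vi›
  have hmem : C.decision (fun _ => d) 1 ∅ ∈
      ⋂ c ∈ {c : Fin n → Option Vi | IsInputConf n (8 * z) c}, val c :=
    Set.mem_iInter₂.2 fun _ => C.decision_mem_val d
  rw [hnontriv] at hmem
  exact hmem

/-- Every deterministic algorithm solving a non-trivial
`val`-agreement problem in the omission model (with `8 ≤ t < n`, `8 ∣ t`)
has message complexity at least `t² / 32`. -/
theorem nontrivial_agreement_message_lower_bound
    (n t : ℕ) (ht8 : 8 ≤ t) (htn : t < n) (hdvd : 8 ∣ t)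
    (Vi Vo : Type) [Nonempty Vi]
    (val : (Fin n → Option Vi) → Set Vo)
    -- `val` is a validity property
    (hval : ∀ c : Fin n → Option Vi, IsInputConf n t c → (val c).Nonempty)
    -- the `val`-agreement problem is non-trivial
    (hnontriv : (⋂ c ∈ {c : Fin n → Option Vi | IsInputConf n t c}, val c) = ∅)
    (A : Algorithm n Vi Vo) (hA : SolvesVal t A val) :
    ((t ^ 2 / 32 : ℕ) : ℕ∞) ≤ MsgComplexity t A :=
  nontrivial_agreement_message_lower_bound_general n t htn hdvd Vi Vo val hnontriv A hA
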